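/- For q ≥ 2, the minimum over real numbers −1/2 = a_1 < a_2 < … < a_q of the distortion error (1/6)·∫ over the segment {(x, −√3/2) : −1/2 ≤ x ≤ 7/2 − 2√3} of the squared distance to the nearest point among {(a_i, √3 a_i) : 1 ≤ i ≤ q} (with Voronoi cell boundaries on the segment at x = 2(a_i + a_{i+1}) + 3/2) is attained when a_i = (i−1)(2−√3)/(2q−1) − 1/2, and the minimum value equals 4(26 − 15√3)(3q(q−1) + 1)/(9(1 − 2q)²). -/

import Mathlib

open Real intervalIntegral

noncomputable section

/-- Distortion error on the segment `{(x, −√3/2) : −1/2 ≤ x ≤ 7/2 − 2√3}` of the bottom side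
of the hexagon (density `1/6`), for `q` points `(aᵢ, √3 aᵢ)` on the long diagonal `y = √3 x`:
each point of the segment is assigned to the nearest of the `q` points. -/
def diagErr (q : ℕ) (a : Fin q → ℝ) : ℝ :=
  (1 / 6 : ℝ) *
    ∫ x in (-(1 / 2) : ℝ)..(7 / 2 - 2 * Real.sqrt 3 : ℝ),
      ⨅ i : Fin q, ((x - a i) ^ 2 + ((-(Real.sqrt 3 / 2)) - Real.sqrt 3 * a i) ^ 2)

namespace DiagonalOpt

lemma infsq_bdd' (q : ℕ) (t : ℕ → ℝ) (u : ℝ) :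
    BddBelow (Set.range fun i : Fin q => (u - t i)^2) :=
  ⟨0, by rintro x ⟨j, rfl⟩; positivity⟩

lemma infsq_continuous (q : ℕ) [Nonempty (Fin q)] (t : ℕ → ℝ) :
    Continuous fun u : ℝ => ⨅ i : Fin q, (u - t i)^2 := by
  have h : (fun u : ℝ => ⨅ i : Fin q, (u - t i)^2)
      = fun u => Finset.univ.inf' Finset.univ_nonempty (fun i : Fin q => (u - t i)^2) := by
    funext u; rw [Finset.inf'_univ_eq_ciInf]
  rw [h]
  exact Continuous.finset_inf'_apply _ (fun i _ => by fun_prop)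

lemma integral_sq_sub (α β c : ℝ) :
    ∫ u in α..β, (u - c)^2 = ((β - c)^3 - (α - c)^3)/3 := by
  have := intervalIntegral.integral_comp_sub_right (a := α) (b := β) (fun x => x^2) c
  rw [this, integral_pow]
  norm_num

lemma add_infsq (q : ℕ) [Nonempty (Fin q)] (c : ℝ) (g : Fin q → ℝ)
    (hb : BddBelow (Set.range g)) :
    (⨅ i, (c + g i)) = c + ⨅ i, g i := by
  obtain ⟨b, hbb⟩ := hb
  apply le_antisymm
  · rw [← sub_le_iff_le_add']
    apply le_ciInf
    intro i
    rw [sub_le_iff_le_add']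
    have hb2 : BddBelow (Set.range fun i => c + g i) := by
      refine ⟨c + b, ?_⟩
      rintro x ⟨j, rfl⟩
      exact (add_le_add_iff_left c).mpr (hbb ⟨j, rfl⟩)
    exact ciInf_le hb2 i
  · exact le_ciInf fun i => (add_le_add_iff_left c).mpr (ciInf_le ⟨b, hbb⟩ i)

lemma integrand_split (q : ℕ) [Nonempty (Fin q)] (a : Fin q → ℝ) (t : ℕ → ℝ)
    (hta : ∀ i : Fin q, t i = 2*(a i + 1/2)) (x : ℝ) :
    (⨅ i : Fin q, ((x - a i) ^ 2 + ((-(Real.sqrt 3 / 2)) - Real.sqrt 3 * a i) ^ 2))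
      = 3*(x + 1/2)^2/4 + ⨅ i : Fin q, (((x+1/2)/2) - t i)^2 := by
  rw [← add_infsq q _ _ (infsq_bdd' q t ((x+1/2)/2))]
  congr 1
  funext i
  have h3 : Real.sqrt 3 ^ 2 = 3 := Real.sq_sqrt (by norm_num)
  rw [hta i]
  linear_combination (1/2 + a i)^2 * h3

lemma diagErr_eq (q : ℕ) (hq : 0 < q) (a : Fin q → ℝ) (t : ℕ → ℝ)
    (hta : ∀ i : Fin q, t i = 2*(a i + 1/2)) :
    diagErr q a = (2 - Real.sqrt 3)^3/3
      + (1/3) * ∫ u in (0:ℝ)..(2 - Real.sqrt 3), ⨅ i : Fin q, (u - t i)^2 := by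
  haveI : Nonempty (Fin q) := Fin.pos_iff_nonempty.mp hq
  set G : ℝ → ℝ := fun u => ⨅ i : Fin q, (u - t i)^2 with hG
  have hGc : Continuous G := infsq_continuous q t
  set M : ℝ := 2 - Real.sqrt 3 with hM
  have hsplit : ∀ x : ℝ,
      (⨅ i : Fin q, ((x - a i) ^ 2 + ((-(Real.sqrt 3 / 2)) - Real.sqrt 3 * a i) ^ 2))
        = 3*(x + 1/2)^2/4 + G ((x+1/2)/2) := fun x => integrand_split q a t hta x
  unfold diagErr
  rw [intervalIntegral.integral_congr (g := fun x => 3*(x + 1/2)^2/4 + G ((x+1/2)/2))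
    (fun x _ => hsplit x)]
  have hint2 : IntervalIntegrable (fun x : ℝ => G ((x+1/2)/2)) MeasureTheory.volume
      (-(1/2)) (7/2 - 2*Real.sqrt 3) := by
    apply Continuous.intervalIntegrable
    exact hGc.comp (by fun_prop)
  rw [intervalIntegral.integral_add (Continuous.intervalIntegrable (by fun_prop) _ _) hint2]
  have h1 : (∫ x in (-(1/2):ℝ)..(7/2 - 2*Real.sqrt 3), 3*(x+1/2)^2/4)
      = (3/4) * (((7/2 - 2*Real.sqrt 3) - (-(1/2)))^3 - ((-(1/2):ℝ) - (-(1/2)))^3)/3 := by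
    have e : (fun x : ℝ => 3*(x+1/2)^2/4) = fun x => (3/4) * (x - (-(1/2)))^2 := by
      funext x; ring
    rw [e, intervalIntegral.integral_const_mul, integral_sq_sub]
    ring
  have h2 : (∫ x in (-(1/2):ℝ)..(7/2 - 2*Real.sqrt 3), G ((x+1/2)/2))
      = 2 * ∫ u in (0:ℝ)..M, G u := by
    have hcomp := intervalIntegral.integral_comp_add_right
      (a := (-(1/2):ℝ)) (b := 7/2 - 2*Real.sqrt 3) (fun y => G (y/2)) (1/2)
    rw [hcomp, show (-(1/2):ℝ) + 1/2 = 0 by ring,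
      show (7/2 - 2*Real.sqrt 3 : ℝ) + 1/2 = 2*M by rw [hM]; ring]
    have hdiv := intervalIntegral.integral_comp_div
      (a := (0:ℝ)) (b := 2*M) (c := (2:ℝ)) (f := G) (by norm_num)
    rw [hdiv, show (0:ℝ)/2 = 0 by norm_num, show (2*M)/2 = M by ring, smul_eq_mul]
  rw [h1, h2, show ((7/2 - 2*Real.sqrt 3) - (-(1/2)) : ℝ) = 2*M by rw [hM]; ring]
  ring

lemma cell_poly (A B c hv : ℝ) (hAB : A ≤ B) (hv0 : 0 ≤ hv) :
    hv^2*(B - A) - (4/3)*hv^3 ≤ ((B - c)^3 - (A - c)^3)/3 := by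
  nlinarith [mul_nonneg (sq_nonneg ((B - c) + (A - c))) (by linarith : (0:ℝ) ≤ (B - c) - (A - c)),
    mul_nonneg (sq_nonneg ((B - A) - 2*hv)) (by linarith : (0:ℝ) ≤ (B - A) + 4*hv)]

lemma cell_poly0 (B hv : ℝ) (hB : 0 ≤ B) (hv0 : 0 ≤ hv) :
    hv^2*(B - 0) - (4/3)*hv^3 + (2/3)*hv^3 ≤ ((B - 0)^3 - (0 - 0)^3)/3 := by
  nlinarith [mul_nonneg (sq_nonneg (B - hv)) (by linarith : (0:ℝ) ≤ B + 2*hv)]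

lemma quant_lb (q : ℕ) (hq : 1 ≤ q) (M : ℝ) (hM : 0 ≤ M) (t : ℕ → ℝ)
    (ht : Monotone t) (h0 : t 0 = 0) :
    M^3/(3*(2*(q:ℝ) - 1)^2) ≤ ∫ u in (0:ℝ)..M, ⨅ i : Fin q, (u - t i)^2 := by
  haveI : Nonempty (Fin q) := Fin.pos_iff_nonempty.mp hq
  set F : ℝ → ℝ := fun u => ⨅ i : Fin q, (u - t i)^2 with hF
  have hFc : Continuous F := infsq_continuous q t
  have htn : ∀ n, 0 ≤ t n := fun n => h0 ▸ ht (Nat.zero_le n)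
  have hq' : (1:ℝ) ≤ (q:ℝ) := by exact_mod_cast hq
  have hden : (0:ℝ) < 2*(q:ℝ) - 1 := by linarith
  set h : ℝ := M/(2*(q:ℝ)-1) with hh
  have hh0 : 0 ≤ h := div_nonneg hM hden.le
  have e2 : M^3/(3*(2*(q:ℝ) - 1)^2) = h^2*M - (q:ℝ)*((4/3)*h^3) + (2/3)*h^3 := by
    have hne : (2*(q:ℝ)-1) ≠ 0 := ne_of_gt hden
    rw [hh]
    field_simp
    ring
  set m : ℕ → ℝ := fun i => if i = 0 then 0 else if q ≤ i then M
    else max 0 (min M ((t (i-1) + t i)/2)) with hm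
  have hm0 : m 0 = 0 := by simp [hm]
  have hmq : m q = M := by simp [hm]; omega
  have hmmid : ∀ i, 1 ≤ i → i < q → m i = max 0 (min M ((t (i-1) + t i)/2)) := by
    intro i ha hb
    simp only [hm]
    rw [if_neg (by omega), if_neg (by omega)]
  have hmrange : ∀ i, 0 ≤ m i ∧ m i ≤ M := by
    intro i
    by_cases h1 : i = 0
    · simp [hm, h1, hM]
    · by_cases h2 : q ≤ i
      · simp [hm, h1, h2, hM]
      · refine ⟨?_, ?_⟩
        · simp only [hm, if_neg h1, if_neg h2]; exact le_max_left _ _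
        · simp only [hm, if_neg h1, if_neg h2]
          exact max_le hM (min_le_left _ _)
  have hmstep : ∀ i, m i ≤ m (i+1) := by
    intro i
    by_cases h1 : i = 0
    · subst h1; rw [hm0]; exact (hmrange 1).1
    · by_cases h2 : q ≤ i
      · have e1 : m i = M := by simp [hm, h1, h2]
        have e2 : m (i+1) = M := by simp [hm, (by omega : ¬ i+1 = 0), (by omega : q ≤ i+1)]
        rw [e1, e2]
      · by_cases h3 : q ≤ i+1
        · have : m (i+1) = M := by simp [hm, (by omega : ¬ i+1 = 0), h3]
          rw [this]; exact (hmrange i).2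
        · have e1 : m i = max 0 (min M ((t (i-1) + t i)/2)) := hmmid i (by omega) (by omega)
          have e2' : m (i+1) = max 0 (min M ((t ((i+1)-1) + t (i+1))/2)) := hmmid (i+1) (by omega) (by omega)
          have e2 : m (i+1) = max 0 (min M ((t i + t (i+1))/2)) := by
            rw [e2', Nat.add_sub_cancel]
          rw [e1, e2]
          have ha : t (i-1) ≤ t i := ht (by omega)
          have hb : t i ≤ t (i+1) := ht (by omega)
          exact max_le_max le_rfl (min_le_min le_rfl (by linarith))
  have hFdef : ∀ u, F u = ⨅ i : Fin q, (u - t i)^2 := fun u => rfl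
  clear hm hh hF
  clear_value F h m
  -- Voronoi property
  have hvor : ∀ i, i < q → ∀ u, m i ≤ u → u ≤ m (i+1) → m i < m (i+1) →
      (u - t i)^2 ≤ F u := by
    intro i hiq u hu1 hu2 hne
    rw [hFdef]
    apply le_ciInf
    intro j
    rcases lt_trichotomy (j:ℕ) i with hj | hj | hj
    · -- j < i
      have hi1 : ¬ i = 0 := by omega
      have hiq' : ¬ q ≤ i := by omega
      have hmiM : m i < M := lt_of_lt_of_le hne (hmrange (i+1)).2
      have hμM : (t (i-1) + t i)/2 < M := by
        by_contra hc
        push_neg at hc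
        have : m i = M := by
          rw [hmmid i (by omega) (by omega), min_eq_left hc, max_eq_right hM]
        linarith
      have hmi : (t (i-1) + t i)/2 ≤ m i := by
        have : min M ((t (i-1) + t i)/2) = (t (i-1) + t i)/2 := min_eq_right hμM.le
        calc (t (i-1) + t i)/2 = min M ((t (i-1) + t i)/2) := this.symm
          _ ≤ max 0 (min M ((t (i-1) + t i)/2)) := le_max_right _ _
          _ = m i := (hmmid i (by omega) (by omega)).symm
      have ha : t (j:ℕ) ≤ t (i-1) := ht (by omega)
      have hb : t (j:ℕ) ≤ t i := ht (by omega)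
      nlinarith [mul_nonneg (sub_nonneg.mpr hb) (by linarith : (0:ℝ) ≤ 2*u - t i - t (j:ℕ))]
    · exact le_of_eq (by rw [hj])
    · -- j > i
      have hi1q : i + 1 < q := by omega
      have hμ0 : 0 ≤ (t i + t (i+1))/2 := by
        have := htn i; have := htn (i+1); linarith
      have hstep : m (i+1) ≤ (t i + t (i+1))/2 := by
        have e2' : m (i+1) = max 0 (min M ((t ((i+1)-1) + t (i+1))/2)) := hmmid (i+1) (by omega) (by omega)
        calc m (i+1) = max 0 (min M ((t i + t (i+1))/2)) := by rw [e2', Nat.add_sub_cancel]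
          _ ≤ (t i + t (i+1))/2 := max_le hμ0 (min_le_right _ _)
      have ha : t (i+1) ≤ t (j:ℕ) := ht (by omega)
      have hb : t i ≤ t (j:ℕ) := le_trans (ht (by omega)) ha
      nlinarith [mul_nonneg (sub_nonneg.mpr hb) (by linarith : (0:ℝ) ≤ t i + t (j:ℕ) - 2*u)]
  -- per-cell lower bound
  have hcell : ∀ i, i < q →
      h^2*(m (i+1) - m i) - (4/3)*h^3 + (if i = 0 then (2/3)*h^3 else 0)
        ≤ ∫ u in m i..m (i+1), F u := by
    intro i hiq
    rcases eq_or_lt_of_le (hmstep i) with heq | hlt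
    · rw [← heq, intervalIntegral.integral_same]
      have h3 : 0 ≤ h^3 := pow_nonneg hh0 3
      split_ifs <;> nlinarith
    · have hint1 : IntervalIntegrable (fun u : ℝ => (u - t i)^2) MeasureTheory.volume
          (m i) (m (i+1)) := (by fun_prop : Continuous fun u : ℝ => (u - t i)^2).intervalIntegrable _ _
      have hmono := intervalIntegral.integral_mono_on (hmstep i) hint1
        (hFc.intervalIntegrable _ _)
        (fun u hu => hvor i hiq u hu.1 hu.2 hlt)
      rw [integral_sq_sub] at hmono
      refine le_trans ?_ hmono
      have hα0 : 0 ≤ m i := (hmrange i).1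
      have h3 : 0 ≤ h^3 := pow_nonneg hh0 3
      by_cases hi0 : i = 0
      · subst hi0
        rw [if_pos rfl, hm0, h0]
        rw [hm0] at hlt
        exact cell_poly0 (m (0+1)) h (by linarith) hh0
      · rw [if_neg hi0, add_zero]
        exact cell_poly (m i) (m (i+1)) (t i) h (hmstep i) hh0
  -- telescoping sum
  have hsum := intervalIntegral.sum_integral_adjacent_intervals (μ := MeasureTheory.volume)
    (a := m) (n := q) (fun k _ => hFc.intervalIntegrable _ _)
  rw [hm0, hmq] at hsum
  have e1 : ∑ i ∈ Finset.range q, (h^2*(m (i+1) - m i) - (4/3)*h^3 + (if i = 0 then (2/3)*h^3 else 0))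
      = h^2*M - (q:ℝ)*((4/3)*h^3) + (2/3)*h^3 := by
    rw [Finset.sum_add_distrib, Finset.sum_sub_distrib, ← Finset.mul_sum,
      Finset.sum_range_sub (f := m), hm0, hmq, Finset.sum_const, Finset.sum_ite_eq' (Finset.range q) 0]
    simp [Finset.mem_range, (by omega : 0 < q)]
  calc M^3/(3*(2*(q:ℝ) - 1)^2)
      = ∑ i ∈ Finset.range q, (h^2*(m (i+1) - m i) - (4/3)*h^3 + (if i = 0 then (2/3)*h^3 else 0)) := by
        rw [e1, e2]
    _ ≤ ∑ i ∈ Finset.range q, ∫ u in m i..m (i+1), F u :=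
        Finset.sum_le_sum (fun i hi => hcell i (Finset.mem_range.mp hi))
    _ = ∫ u in (0:ℝ)..M, F u := hsum

lemma quant_ub (q : ℕ) (hq : 1 ≤ q) (M : ℝ) (hM : 0 ≤ M) (t : ℕ → ℝ)
    (htv : ∀ n, n < q → t n = 2*(n:ℝ)*M/(2*(q:ℝ)-1)) :
    (∫ u in (0:ℝ)..M, ⨅ i : Fin q, (u - t i)^2) ≤ M^3/(3*(2*(q:ℝ) - 1)^2) := by
  haveI : Nonempty (Fin q) := Fin.pos_iff_nonempty.mp hq
  have hq' : (1:ℝ) ≤ (q:ℝ) := by exact_mod_cast hq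
  have hden : (0:ℝ) < 2*(q:ℝ) - 1 := by linarith
  have hne : (2*(q:ℝ)-1) ≠ 0 := ne_of_gt hden
  set h : ℝ := M/(2*(q:ℝ)-1) with hh
  have hh0 : 0 ≤ h := div_nonneg hM hden.le
  have hM2q : M = (2*(q:ℝ)-1)*h := by rw [hh]; field_simp
  have efin : M^3/(3*(2*(q:ℝ) - 1)^2) = (q:ℝ)*((2/3)*h^3) - (1/3)*h^3 := by
    rw [hh]; field_simp
  set F : ℝ → ℝ := fun u => ⨅ i : Fin q, (u - t i)^2 with hF
  have hFc : Continuous F := infsq_continuous q t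
  have hFle : ∀ i, i < q → ∀ u : ℝ, F u ≤ (u - t i)^2 := by
    intro i hiq u
    exact ciInf_le (infsq_bdd' q t u) ⟨i, hiq⟩
  set m : ℕ → ℝ := fun i => if i = 0 then 0 else if q ≤ i then M else (2*(i:ℝ)-1)*h
    with hm
  have hm0 : m 0 = 0 := by simp [hm]
  have hmq : m q = M := by simp [hm]; omega
  have hmmid : ∀ i, 1 ≤ i → i < q → m i = (2*(i:ℝ)-1)*h := by
    intro i ha hb
    simp only [hm]
    rw [if_neg (by omega), if_neg (by omega)]
  have hm1 : m 1 = h := by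
    by_cases hq1 : q = 1
    · subst hq1
      rw [show m 1 = M by simp [hm]]
      rw [hM2q]; norm_num
    · rw [hmmid 1 le_rfl (by omega)]; norm_num
  have hmstep : ∀ i, i < q → m i ≤ m (i+1) := by
    intro i hiq
    by_cases h1 : i = 0
    · subst h1; rw [hm0, hm1]; exact hh0
    · rw [hmmid i (by omega) hiq]
      by_cases h2 : q ≤ i + 1
      · have : m (i+1) = M := by simp [hm, (by omega : ¬ i+1 = 0), h2]
        rw [this, hM2q]
        have : (i:ℝ) ≤ (q:ℝ) - 1 := by
          have : (i:ℝ) + 1 ≤ (q:ℝ) := by exact_mod_cast hiq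
          linarith
        nlinarith
      · rw [hmmid (i+1) (by omega) (by omega)]
        push_cast
        nlinarith
  have hcell : ∀ i, i < q →
      (∫ u in m i..m (i+1), F u) ≤ (2/3)*h^3 - (if i = 0 then (1/3)*h^3 else 0) := by
    intro i hiq
    have hint1 : IntervalIntegrable (fun u : ℝ => (u - t i)^2) MeasureTheory.volume
        (m i) (m (i+1)) := (by fun_prop : Continuous fun u : ℝ => (u - t i)^2).intervalIntegrable _ _
    have hub := intervalIntegral.integral_mono_on (hmstep i hiq)
      (hFc.intervalIntegrable _ _) hint1 (fun u _ => hFle i hiq u)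
    rw [integral_sq_sub] at hub
    refine hub.trans (le_of_eq ?_)
    by_cases hi0 : i = 0
    · subst hi0
      rw [if_pos rfl, hm0, hm1, show t 0 = 0 by rw [htv 0 (by omega)]; norm_num]
      ring
    · rw [if_neg hi0, sub_zero]
      have e1 : m i = (2*(i:ℝ)-1)*h := hmmid i (by omega) hiq
      have eti : t i = 2*(i:ℝ)*h := by
        rw [htv i hiq, hM2q]; field_simp
      have e2 : m (i+1) = (2*(i:ℝ)+1)*h := by
        by_cases h2 : q ≤ i + 1
        · have hiq1 : i + 1 = q := by omega
          have hcast : (i:ℝ) = (q:ℝ) - 1 := by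
            have : ((i:ℕ):ℝ) + 1 = ((q:ℕ):ℝ) := by exact_mod_cast congrArg (Nat.cast : ℕ → ℝ) hiq1
            linarith
          have : m (i+1) = M := by simp [hm, (by omega : ¬ i+1 = 0), h2]
          rw [this, hM2q, hcast]; ring
        · rw [hmmid (i+1) (by omega) (by omega)]; push_cast; ring
      rw [e1, e2, eti]; ring
  have hsum := intervalIntegral.sum_integral_adjacent_intervals (μ := MeasureTheory.volume)
    (a := m) (n := q) (fun k _ => hFc.intervalIntegrable _ _)
  rw [hm0, hmq] at hsum
  have e1 : ∑ i ∈ Finset.range q, ((2/3)*h^3 - (if i = 0 then (1/3)*h^3 else 0))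
      = (q:ℝ)*((2/3)*h^3) - (1/3)*h^3 := by
    rw [Finset.sum_sub_distrib, Finset.sum_const, Finset.sum_ite_eq' (Finset.range q) 0]
    simp [Finset.mem_range, (by omega : 0 < q)]
  calc (∫ u in (0:ℝ)..M, F u)
      = ∑ i ∈ Finset.range q, ∫ u in m i..m (i+1), F u := hsum.symm
    _ ≤ ∑ i ∈ Finset.range q, ((2/3)*h^3 - (if i = 0 then (1/3)*h^3 else 0)) :=
        Finset.sum_le_sum (fun i hi => hcell i (Finset.mem_range.mp hi))
    _ = M^3/(3*(2*(q:ℝ) - 1)^2) := by rw [e1, efin]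

end DiagonalOpt

open DiagonalOpt in
/-- For `q ≥ 2`, the distortion error over `−1/2 = a₁ < a₂ < … < a_q` is minimized at
`aᵢ = (i−1)(2−√3)/(2q−1) − 1/2`, with minimum value
`4(26 − 15√3)(3q(q−1) + 1)/(9(1 − 2q)²)`. -/
theorem diagonal_points_optimal (q : ℕ) (hq : 2 ≤ q) :
    (∀ a : Fin q → ℝ, a ⟨0, by omega⟩ = -(1 / 2) → StrictMono a →
      diagErr q (fun i => (i : ℝ) * (2 - Real.sqrt 3) / (2 * (q : ℝ) - 1) - 1 / 2) ≤
        diagErr q a) ∧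
    diagErr q (fun i => (i : ℝ) * (2 - Real.sqrt 3) / (2 * (q : ℝ) - 1) - 1 / 2) =
      4 * (26 - 15 * Real.sqrt 3) * (3 * (q : ℝ) * ((q : ℝ) - 1) + 1) /
        (9 * (1 - 2 * (q : ℝ)) ^ 2) := by
  have hq0 : 0 < q := by omega
  have h3 : Real.sqrt 3 ^ 2 = 3 := Real.sq_sqrt (by norm_num)
  have hs0 : 0 ≤ Real.sqrt 3 := Real.sqrt_nonneg 3
  have hs2 : Real.sqrt 3 < 2 := by nlinarith
  set M : ℝ := 2 - Real.sqrt 3 with hMdef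
  have hM : 0 ≤ M := by rw [hMdef]; linarith
  have hq' : (1:ℝ) ≤ (q:ℝ) := by exact_mod_cast hq0
  have hden : (0:ℝ) < 2*(q:ℝ) - 1 := by linarith
  have hne : (2*(q:ℝ)-1) ≠ 0 := ne_of_gt hden
  -- the optimal configuration and its ℕ-extension
  set aopt : Fin q → ℝ := fun i => (i : ℝ) * (2 - Real.sqrt 3) / (2 * (q : ℝ) - 1) - 1 / 2
    with haopt
  set topt : ℕ → ℝ := fun n => 2*(n:ℝ)*M/(2*(q:ℝ)-1) with htopt
  have htaopt : ∀ i : Fin q, topt i = 2*(aopt i + 1/2) := by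
    intro i
    simp only [htopt, haopt, hMdef]
    ring
  have hvopt : ∫ u in (0:ℝ)..M, ⨅ i : Fin q, (u - topt i)^2 = M^3/(3*(2*(q:ℝ) - 1)^2) := by
    apply le_antisymm
    · exact quant_ub q (by omega) M hM topt (fun n _ => rfl)
    · apply quant_lb q (by omega) M hM topt ?_ (by simp [htopt])
      intro n1 n2 hn
      simp only [htopt]
      have hcast : (n1:ℝ) ≤ (n2:ℝ) := by exact_mod_cast hn
      gcongr
  constructor
  · -- minimality
    intro a ha0 hsm
    have ha0' : ∀ (hpf : 0 < q), a ⟨0, hpf⟩ = -(1/2) := fun _ => ha0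
    set t : ℕ → ℝ := fun n => 2*(a ⟨min n (q-1), by omega⟩ + 1/2) with htd
    have hta : ∀ i : Fin q, t i = 2*(a i + 1/2) := by
      intro i
      have h1 : min (i:ℕ) (q-1) = (i:ℕ) := by have := i.isLt; omega
      simp only [htd, h1, Fin.eta]
    have ht0 : t 0 = 0 := by
      have h1 : min 0 (q-1) = 0 := by omega
      simp only [htd, h1, ha0']
      norm_num
    have htm : Monotone t := by
      intro n1 n2 hn
      simp only [htd]
      have hle : a ⟨min n1 (q-1), by omega⟩ ≤ a ⟨min n2 (q-1), by omega⟩ := by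
        apply hsm.monotone
        rw [Fin.mk_le_mk]
        omega
      linarith
    have hlb := quant_lb q (by omega) M hM t htm ht0
    rw [diagErr_eq q hq0 a t hta, diagErr_eq q hq0 aopt topt htaopt, hvopt]
    have : (2 - Real.sqrt 3) = M := rfl
    rw [this]
    linarith
  · -- value
    rw [diagErr_eq q hq0 aopt topt htaopt, hvopt]
    have h26 : (2 - Real.sqrt 3)^3 = 26 - 15*Real.sqrt 3 := by
      linear_combination (6 - Real.sqrt 3) * h3
    have hne2 : (1 - 2*(q:ℝ)) ≠ 0 := by intro hc; apply hne; linarith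
    rw [show M = 2 - Real.sqrt 3 from rfl, h26]
    field_simp
    ring

end
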